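/- arXiv:1905.02445 — 2 statements merged into one kernel-verified Lean document; each statement's English description precedes it below -/
import Mathlib

section
/- Let G ⊆ K_{m,n} be a connected bipartite graph and let A ∈ I_G^(1) be a first independent set, with H_A the supporting hyperplane of a nonempty one-sided part of A. Then H_A ∩ σ_G^∨ equals the convex cone generated by {e^i + f^j : (i, m+j) ∈ E(G{A})}; that is, the facet of σ_G^∨ associated to A is exactly the dual edge cone of the associated subgraph G{A}. -/
/-!
Common setup: a bipartite graph `G ⊆ K_{m,n}` is encoded by an edge relation
`E : Fin m → Fin n → Prop` (vertex set `V = Fin m ⊕ Fin n`, with `U₁` the left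
summand and `U₂` the right summand).
-/

namespace ToricBipartite

open Sum Finset

variable {m n : ℕ}

/-- The simple graph on `Fin m ⊕ Fin n` determined by the bipartite edge relation `E`. -/
def toGraph (E : Fin m → Fin n → Prop) : SimpleGraph (Fin m ⊕ Fin n) where
  Adj u v :=
    (∃ i j, u = inl i ∧ v = inr j ∧ E i j) ∨ (∃ i j, u = inr j ∧ v = inl i ∧ E i j)
  symm := by
    constructor
    rintro u v (⟨i, j, hu, hv, h⟩ | ⟨i, j, hu, hv, h⟩)
    · exact Or.inr ⟨i, j, hv, hu, h⟩
    · exact Or.inl ⟨i, j, hv, hu, h⟩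
  loopless := by
    constructor
    rintro u (⟨i, j, hu, hv, h⟩ | ⟨i, j, hu, hv, h⟩) <;> rw [hu] at hv <;> simp at hv

/-- The generator `e^i + f^j` of the dual edge cone. -/
def gen (i : Fin m) (j : Fin n) : (Fin m ⊕ Fin n) → ℝ :=
  Pi.single (inl i) 1 + Pi.single (inr j) 1

/-- The set of generators `{e^i + f^j : (i, m+j) ∈ E(G)}` of the dual edge cone. -/
def genSet (E : Fin m → Fin n → Prop) : Set ((Fin m ⊕ Fin n) → ℝ) :=
  {x | ∃ i j, E i j ∧ x = gen i j}

/-- The dual edge cone `σ_G^∨ ⊆ ℝ^{m+n}`: all nonnegative combinations of the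
generators `e^i + f^j` over the edges of `G`. -/
def dualEdgeCone (E : Fin m → Fin n → Prop) : Set ((Fin m ⊕ Fin n) → ℝ) :=
  {x | ∃ c : Fin m → Fin n → ℝ, (∀ i j, 0 ≤ c i j) ∧ (∀ i j, c i j ≠ 0 → E i j) ∧
      x = ∑ i, ∑ j, c i j • gen i j}

/-- The neighbour set `N(A) ⊆ U₂` of a set `A ⊆ U₁`. -/
def nbrR (E : Fin m → Fin n → Prop) [∀ i j, Decidable (E i j)]
    (A : Finset (Fin m)) : Finset (Fin n) :=
  univ.filter fun j => ∃ i ∈ A, E i j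

/-- The neighbour set `N(B) ⊆ U₁` of a set `B ⊆ U₂`. -/
def nbrL (E : Fin m → Fin n → Prop) [∀ i j, Decidable (E i j)]
    (B : Finset (Fin n)) : Finset (Fin m) :=
  univ.filter fun i => ∃ j ∈ B, E i j

/-- `A₁ ⊔ A₂ ⊆ U₁ ⊔ U₂` contains no pair of adjacent vertices (since the graph is
bipartite this says there is no edge between `A₁` and `A₂`). -/
def IsIndepPair (E : Fin m → Fin n → Prop)
    (A₁ : Finset (Fin m)) (A₂ : Finset (Fin n)) : Prop :=
  ∀ i ∈ A₁, ∀ j ∈ A₂, ¬ E i j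

/-- A two-sided independent set `B₁ ⊔ B₂`, with `∅ ≠ B₁ ⊊ U₁` and `∅ ≠ B₂ ⊊ U₂`. -/
def TwoSidedIndep (E : Fin m → Fin n → Prop)
    (B₁ : Finset (Fin m)) (B₂ : Finset (Fin n)) : Prop :=
  B₁.Nonempty ∧ B₁ ≠ univ ∧ B₂.Nonempty ∧ B₂ ≠ univ ∧ IsIndepPair E B₁ B₂

/-- A two-sided *maximal* independent set: two-sided independent, and contained in no
strictly larger independent set of the graph. -/
def TwoSidedMaxIndep (E : Fin m → Fin n → Prop)
    (A₁ : Finset (Fin m)) (A₂ : Finset (Fin n)) : Prop :=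
  TwoSidedIndep E A₁ A₂ ∧
    ∀ B₁ B₂, IsIndepPair E B₁ B₂ → A₁ ⊆ B₁ → A₂ ⊆ B₂ → B₁ = A₁ ∧ B₂ = A₂

/-- Membership in `I_G^(*)`: either a two-sided maximal independent set, or a one-sided
independent set of the form `U_i ∖ {v}` not contained in any two-sided independent set.
A set is encoded as the pair of its parts `(A₁, A₂) = (A ∩ U₁, A ∩ U₂)`. -/
def InIStar (E : Fin m → Fin n → Prop)
    (A₁ : Finset (Fin m)) (A₂ : Finset (Fin n)) : Prop :=
  TwoSidedMaxIndep E A₁ A₂ ∨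
    (A₂ = ∅ ∧ A₁.Nonempty ∧ (∃ v, A₁ = {v}ᶜ) ∧
      ¬ ∃ B₁ B₂, TwoSidedIndep E B₁ B₂ ∧ A₁ ⊆ B₁) ∨
    (A₁ = ∅ ∧ A₂.Nonempty ∧ (∃ v, A₂ = {v}ᶜ) ∧
      ¬ ∃ B₁ B₂, TwoSidedIndep E B₁ B₂ ∧ A₂ ⊆ B₂)

/-- The edge relation of the associated (spanning) subgraph `G{A}` of `A ∈ I_G^(*)`:
for one-sided `A = A₁ ⊆ U₁` the edges of `G[A₁ ⊔ N(A₁)] ⊔ G[(U₁∖A₁) ⊔ (U₂∖N(A₁))]`,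
symmetrically for one-sided `A = A₂ ⊆ U₂`, and for two-sided `A = A₁ ⊔ A₂` the edges of
`G[A₁ ⊔ N(A₁)] ⊔ G[A₂ ⊔ N(A₂)]`. -/
def assoc (E : Fin m → Fin n → Prop) [∀ i j, Decidable (E i j)]
    (A₁ : Finset (Fin m)) (A₂ : Finset (Fin n)) : Fin m → Fin n → Prop := fun i j =>
  E i j ∧
    (if A₂ = ∅ then i ∈ A₁ ∨ j ∉ nbrR E A₁
     else if A₁ = ∅ then j ∈ A₂ ∨ i ∉ nbrL E A₂
     else i ∈ A₁ ∨ j ∈ A₂)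

instance (E : Fin m → Fin n → Prop) [∀ i j, Decidable (E i j)]
    (A₁ : Finset (Fin m)) (A₂ : Finset (Fin n)) (i : Fin m) (j : Fin n) :
    Decidable (assoc E A₁ A₂ i j) := by
  unfold assoc; infer_instance

/-- The number of connected components of the bipartite graph with edge relation `E`
(isolated vertices count as connected components). -/
noncomputable def numComponents (E : Fin m → Fin n → Prop) : ℕ :=
  Nat.card (toGraph E).ConnectedComponent

/-- `A ∈ I_G^(1)`: a first independent set, i.e. an element of `I_G^(*)` whose associated
subgraph `G{A}` has exactly two connected components. -/
def FirstIndep (E : Fin m → Fin n → Prop) [∀ i j, Decidable (E i j)]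
    (A₁ : Finset (Fin m)) (A₂ : Finset (Fin n)) : Prop :=
  InIStar E A₁ A₂ ∧ numComponents (assoc E A₁ A₂) = 2

/-- The supporting hyperplane `H_{A₁}` of a one-sided set `A₁ ⊆ U₁`:
`Σ_{v ∈ A₁} x_v = Σ_{v ∈ N(A₁)} x_v`. -/
def hyp1 (E : Fin m → Fin n → Prop) [∀ i j, Decidable (E i j)]
    (A₁ : Finset (Fin m)) : Set ((Fin m ⊕ Fin n) → ℝ) :=
  {x | ∑ i ∈ A₁, x (inl i) = ∑ j ∈ nbrR E A₁, x (inr j)}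

/-- The supporting hyperplane `H_{A₂}` of a one-sided set `A₂ ⊆ U₂`. -/
def hyp2 (E : Fin m → Fin n → Prop) [∀ i j, Decidable (E i j)]
    (A₂ : Finset (Fin n)) : Set ((Fin m ⊕ Fin n) → ℝ) :=
  {x | ∑ j ∈ A₂, x (inr j) = ∑ i ∈ nbrL E A₂, x (inl i)}

/-- The supporting hyperplane `H_A` of `A = A₁ ⊔ A₂`, taken with respect to a nonempty
one-sided part of `A`. -/
def hypA (E : Fin m → Fin n → Prop) [∀ i j, Decidable (E i j)]
    (A₁ : Finset (Fin m)) (A₂ : Finset (Fin n)) : Set ((Fin m ⊕ Fin n) → ℝ) :=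
  if A₁ = ∅ then hyp2 E A₂ else hyp1 E A₁

/-- Connectivity of the induced subgraph `G[S ⊔ T]` for `S ⊆ U₁`, `T ⊆ U₂`. -/
def InducedConnected (E : Fin m → Fin n → Prop)
    (S : Finset (Fin m)) (T : Finset (Fin n)) : Prop :=
  ((toGraph E).induce
    ((inl '' (S : Set (Fin m)) ∪ inr '' (T : Set (Fin n))) : Set (Fin m ⊕ Fin n))).Connected

/-- The degree (valency) sequence of the bipartite graph with edge relation `E`,
as a vector in `ℝ^{m+n}`. -/
def valVec (E : Fin m → Fin n → Prop) [∀ i j, Decidable (E i j)] :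
    (Fin m ⊕ Fin n) → ℝ :=
  Sum.elim (fun i => ((univ.filter fun j => E i j).card : ℝ))
    (fun j => ((univ.filter fun i => E i j).card : ℝ))

/-!
Write a point of `σ_G^∨` as `x = Σ c_ij (e^i + f^j)` with `c ≥ 0` supported on the edges. For
`A₁ ⊆ U₁`, every edge at `A₁` ends in `N(A₁)`, so `Σ_{N(A₁)} x - Σ_{A₁} x` is the total weight `c`
puts on the edges between `U₁ ∖ A₁` and `N(A₁)`. Hence `x ∈ H_{A₁}` exactly when `c` vanishes on
those edges, which are the edges that `G{A}` removes; for a two-sided maximal `A`, maximality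
gives `A₂ = U₂ ∖ N(A₁)`.
-/

theorem _root_.Finset.sum_sum_eq_sum_sum_iff_forall_ne_zero {α β R : Type*}
    [Fintype α] [Fintype β] [AddCommMonoid R] [PartialOrder R] [IsOrderedCancelAddMonoid R]
    {c : α → β → R} (hc : ∀ i j, 0 ≤ c i j) {A : Finset α} {N : Finset β}
    (hN : ∀ i ∈ A, ∀ j, c i j ≠ 0 → j ∈ N) :
    ∑ i ∈ A, ∑ j, c i j = ∑ j ∈ N, ∑ i, c i j ↔ ∀ i j, c i j ≠ 0 → i ∈ A ∨ j ∉ N := by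
  classical
  have hrows : ∑ i ∈ A, ∑ j, c i j = ∑ j ∈ N, ∑ i ∈ A, c i j := by
    rw [Finset.sum_comm]
    refine (Finset.sum_subset (Finset.subset_univ N) fun j _ hj =>
      Finset.sum_eq_zero fun i hi => ?_).symm
    by_contra hcij
    exact hj (hN i hi j hcij)
  have hcols : ∑ j ∈ N, ∑ i, c i j =
      ∑ j ∈ N, ∑ i ∈ A, c i j + ∑ j ∈ N, ∑ i ∈ Aᶜ, c i j := by
    rw [← Finset.sum_add_distrib]
    exact Finset.sum_congr rfl fun j _ => (Finset.sum_add_sum_compl A _).symm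
  rw [hrows, hcols, left_eq_add,
    Finset.sum_eq_zero_iff_of_nonneg fun j _ => Finset.sum_nonneg fun i _ => hc i j]
  simp only [Finset.sum_eq_zero_iff_of_nonneg fun i _ => hc i _, Finset.mem_compl]
  constructor
  · intro h i j hcij
    by_contra! hij
    exact hcij (h j hij.2 i hij.1)
  · intro h j hj i hi
    by_contra hcij
    exact (h i j hcij).elim hi (· hj)

lemma sum_smul_gen_apply_inl (c : Fin m → Fin n → ℝ) (i₀ : Fin m) :
    (∑ i, ∑ j, c i j • gen i j) (inl i₀) = ∑ j, c i₀ j := by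
  simp [gen, Pi.single_apply, Finset.sum_add_distrib, mul_ite]

lemma sum_smul_gen_apply_inr (c : Fin m → Fin n → ℝ) (j₀ : Fin n) :
    (∑ i, ∑ j, c i j • gen i j) (inr j₀) = ∑ i, c i j₀ := by
  simp [gen, Pi.single_apply, Finset.sum_add_distrib, mul_ite]

lemma inter_dualEdgeCone_eq_of_forall {E P : Fin m → Fin n → Prop}
    {H : Set ((Fin m ⊕ Fin n) → ℝ)}
    (hH : ∀ c : Fin m → Fin n → ℝ, (∀ i j, 0 ≤ c i j) → (∀ i j, c i j ≠ 0 → E i j) →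
      ((∑ i, ∑ j, c i j • gen i j) ∈ H ↔ ∀ i j, c i j ≠ 0 → P i j)) :
    H ∩ dualEdgeCone E = dualEdgeCone fun i j => E i j ∧ P i j := by
  ext x
  constructor
  · rintro ⟨hxH, c, hc, hcE, rfl⟩
    exact ⟨c, hc, fun i j hcij => ⟨hcE i j hcij, (hH c hc hcE).1 hxH i j hcij⟩, rfl⟩
  · rintro ⟨c, hc, hcEP, rfl⟩
    have hcE : ∀ i j, c i j ≠ 0 → E i j := fun i j hcij => (hcEP i j hcij).1
    exact ⟨(hH c hc hcE).2 fun i j hcij => (hcEP i j hcij).2, c, hc, hcE, rfl⟩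

variable {E : Fin m → Fin n → Prop} [∀ i j, Decidable (E i j)]

lemma mem_nbrR {A : Finset (Fin m)} {j : Fin n} : j ∈ nbrR E A ↔ ∃ i ∈ A, E i j := by
  simp [nbrR]

lemma mem_nbrL {B : Finset (Fin n)} {i : Fin m} : i ∈ nbrL E B ↔ ∃ j ∈ B, E i j := by
  simp [nbrL]

lemma hyp1_inter_dualEdgeCone (A₁ : Finset (Fin m)) :
    hyp1 E A₁ ∩ dualEdgeCone E =
      dualEdgeCone fun i j => E i j ∧ (i ∈ A₁ ∨ j ∉ nbrR E A₁) := by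
  refine inter_dualEdgeCone_eq_of_forall fun c hc hcE => ?_
  simp only [hyp1, Set.mem_ofPred_eq, sum_smul_gen_apply_inl, sum_smul_gen_apply_inr]
  exact Finset.sum_sum_eq_sum_sum_iff_forall_ne_zero hc
    fun i hi j hcij => mem_nbrR.2 ⟨i, hi, hcE i j hcij⟩

lemma hyp2_inter_dualEdgeCone (A₂ : Finset (Fin n)) :
    hyp2 E A₂ ∩ dualEdgeCone E =
      dualEdgeCone fun i j => E i j ∧ (j ∈ A₂ ∨ i ∉ nbrL E A₂) := by
  refine inter_dualEdgeCone_eq_of_forall fun c hc hcE => ?_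
  simp only [hyp2, Set.mem_ofPred_eq, sum_smul_gen_apply_inl, sum_smul_gen_apply_inr]
  exact (Finset.sum_sum_eq_sum_sum_iff_forall_ne_zero (fun j i => hc i j)
    fun j hj i hcij => mem_nbrL.2 ⟨j, hj, hcE i j hcij⟩).trans
    ⟨fun h i j => h j i, fun h j i => h i j⟩

lemma TwoSidedMaxIndep.mem_right_iff {A₁ : Finset (Fin m)} {A₂ : Finset (Fin n)}
    (hA : TwoSidedMaxIndep E A₁ A₂) (j : Fin n) : j ∈ A₂ ↔ j ∉ nbrR E A₁ := by
  have hindep := hA.1.2.2.2.2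
  rw [mem_nbrR, not_exists]
  refine ⟨fun hj i ⟨hi, hij⟩ => hindep i hi j hj hij, fun hj => ?_⟩
  have hinsert : IsIndepPair E A₁ (insert j A₂) := by
    intro i hi j' hj'
    rcases Finset.mem_insert.1 hj' with rfl | hj'
    exacts [fun hij => hj i ⟨hi, hij⟩, hindep i hi j' hj']
  rw [← (hA.2 A₁ _ hinsert subset_rfl (Finset.subset_insert j A₂)).2]
  exact Finset.mem_insert_self j A₂

theorem facet_eq_dualEdgeCone_assoc_general (m n : ℕ) (E : Fin m → Fin n → Prop)
    [∀ i j, Decidable (E i j)]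
    (A₁ : Finset (Fin m)) (A₂ : Finset (Fin n)) (hA : FirstIndep E A₁ A₂) :
    hypA E A₁ A₂ ∩ dualEdgeCone E = dualEdgeCone (assoc E A₁ A₂) := by
  rcases hA.1 with htwo | ⟨hA₂, hA₁, -, -⟩ | ⟨hA₁, hA₂, -, -⟩
  · have hA₁ : A₁ ≠ ∅ := htwo.1.1.ne_empty
    rw [hypA, if_neg hA₁, hyp1_inter_dualEdgeCone]
    congr! 4 with i j
    rw [assoc, if_neg htwo.1.2.2.1.ne_empty, if_neg hA₁, htwo.mem_right_iff]
  · rw [hypA, if_neg hA₁.ne_empty, hyp1_inter_dualEdgeCone]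
    congr! 4 with i j
    rw [assoc, if_pos hA₂]
  · rw [hypA, if_pos hA₁, hyp2_inter_dualEdgeCone]
    congr! 4 with i j
    rw [assoc, if_neg hA₂.ne_empty, if_pos hA₁]

/-- For a first independent set `A ∈ I_G^(1)` of a connected bipartite
graph `G ⊆ K_{m,n}`, the facet `H_A ∩ σ_G^∨` of the dual edge cone is exactly the dual
edge cone of the associated subgraph `G{A}`. -/
theorem facet_eq_dualEdgeCone_assoc (m n : ℕ) (E : Fin m → Fin n → Prop)
    [∀ i j, Decidable (E i j)] (hconn : (toGraph E).Connected)
    (A₁ : Finset (Fin m)) (A₂ : Finset (Fin n)) (hA : FirstIndep E A₁ A₂) :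
    hypA E A₁ A₂ ∩ dualEdgeCone E = dualEdgeCone (assoc E A₁ A₂) :=
  facet_eq_dualEdgeCone_assoc_general m n E A₁ A₂ hA

end ToricBipartite
end

section
/- Let G ⊆ K_{m,n} be a connected bipartite graph, let a ∈ U₁ and b ∈ U₂, and suppose A = U₁ ∖ {a} and B = U₂ ∖ {b} are first independent sets of G. Then the intersection subgraph G{A} ∩ G{B} (the spanning subgraph whose edges are the common edges of G{A} and G{B}) has exactly three connected components (isolated vertices counting as components) — equivalently, the corresponding pair of extremal rays spans a two-dimensional face of the edge cone — if and only if the induced subgraph G[(U₁ ∖ {a}) ⊔ (U₂ ∖ {b})] is connected. -/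
/-!
Since `A = U₁ ∖ {a}` is a one-sided member of `I_G^(*)`, it lies in no two-sided independent
set; as `A ⊔ {j}` would be one if `j ∈ U₂` had no neighbour in `A`, we get `N(A) = U₂`, and
likewise `N(B) = U₁`. So `G{A}` keeps exactly the edges at `A`, `G{B}` those at `B`, and
`G{A} ∩ G{B}` is `G[A ⊔ B]` plus the two isolated vertices `a` and `b`.
-/

namespace SimpleGraph

variable {V : Type*} {G : SimpleGraph V} {s : Set V}

theorem Reachable.induce_of_isIsolated_of_notMem (hs : ∀ v ∉ s, G.IsIsolated v) {u v : V}
    (hu : u ∈ s) (hv : v ∈ s) (h : G.Reachable u v) :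
    (G.induce s).Reachable ⟨u, hu⟩ ⟨v, hv⟩ := by
  obtain ⟨p⟩ := h
  refine ⟨p.induce s fun x hx => ?_⟩
  classical
  by_contra hxs
  have hux : u ≠ x := by rintro rfl; exact hxs hu
  exact not_reachable_of_neighborSet_right_eq_empty hux (hs x hxs).neighborSet_eq_empty
    ⟨p.takeUntil x hx⟩

theorem card_connectedComponent_eq_card_induce_add [Finite V] (hs : ∀ v ∉ s, G.IsIsolated v) :
    Nat.card G.ConnectedComponent =
      Nat.card (G.induce s).ConnectedComponent + Nat.card ↥sᶜ := by
  let f : (G.induce s).ConnectedComponent ⊕ ↥sᶜ → G.ConnectedComponent :=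
    Sum.elim (ConnectedComponent.map (Embedding.induce s).toHom)
      fun v => G.connectedComponentMk v
  have hf : f.Bijective := by
    refine ⟨Function.Injective.sumElim ?_ ?_ ?_, ?_⟩
    · refine ConnectedComponent.ind₂ fun u v huv => ?_
      exact ConnectedComponent.sound <|
        Reachable.induce_of_isIsolated_of_notMem hs u.2 v.2 (ConnectedComponent.exact huv)
    · rintro ⟨u, hu⟩ ⟨v, _⟩ huv
      by_contra hne
      exact not_reachable_of_neighborSet_left_eq_empty (by simpa using hne)
        (hs u hu).neighborSet_eq_empty (ConnectedComponent.exact huv)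
    · refine ConnectedComponent.ind fun u ⟨v, hv⟩ => ?_
      intro huv
      have huv' : (u : V) ≠ v := by rintro rfl; exact hv u.2
      exact not_reachable_of_neighborSet_right_eq_empty huv' (hs v hv).neighborSet_eq_empty
        (ConnectedComponent.exact huv)
    · refine ConnectedComponent.ind fun v => ?_
      by_cases hv : v ∈ s
      · exact ⟨.inl ((G.induce s).connectedComponentMk ⟨v, hv⟩), rfl⟩
      · exact ⟨.inr ⟨v, hv⟩, rfl⟩
  rw [← Nat.card_eq_of_bijective f hf, Nat.card_sum]

theorem connected_iff_card_connectedComponent_eq_one [Nonempty V] :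
    G.Connected ↔ Nat.card G.ConnectedComponent = 1 := by
  rw [Nat.card_eq_one_iff_unique, connected_iff]
  refine ⟨fun h => ⟨h.1.subsingleton_connectedComponent,
      ⟨G.connectedComponentMk (Classical.arbitrary V)⟩⟩,
    fun ⟨hs, _⟩ => ⟨fun u v => ConnectedComponent.exact (hs.elim _ _), inferInstance⟩⟩

end SimpleGraph

namespace ToricBipartite

open Sum Finset SimpleGraph

variable {m n : ℕ} {E : Fin m → Fin n → Prop}

@[simp] theorem toGraph_adj_inl_inr {i : Fin m} {j : Fin n} :
    (toGraph E).Adj (inl i) (inr j) ↔ E i j := by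
  simp [toGraph]

@[simp] theorem toGraph_adj_inr_inl {i : Fin m} {j : Fin n} :
    (toGraph E).Adj (inr j) (inl i) ↔ E i j := by
  simp [toGraph]

@[simp] theorem not_toGraph_adj_inl_inl {i i' : Fin m} :
    ¬ (toGraph E).Adj (inl i) (inl i') := by
  simp [toGraph]

@[simp] theorem not_toGraph_adj_inr_inr {j j' : Fin n} :
    ¬ (toGraph E).Adj (inr j) (inr j') := by
  simp [toGraph]

theorem numComponents_restrict (S : Finset (Fin m)) (T : Finset (Fin n)) :
    numComponents (fun i j => E i j ∧ i ∈ S ∧ j ∈ T) =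
      Nat.card ((toGraph E).induce
          (inl '' (S : Set (Fin m)) ∪ inr '' (T : Set (Fin n)))).ConnectedComponent
        + Sᶜ.card + Tᶜ.card := by
  set s : Set (Fin m ⊕ Fin n) := inl '' (S : Set (Fin m)) ∪ inr '' (T : Set (Fin n))
  have mem_inl : ∀ i, inl i ∈ s ↔ i ∈ S := by simp [s]
  have mem_inr : ∀ j, inr j ∈ s ↔ j ∈ T := by simp [s]
  set G' := toGraph fun i j => E i j ∧ i ∈ S ∧ j ∈ T
  have hisolated : ∀ v ∉ s, G'.IsIsolated v := by
    rintro (i | j) hv (i' | j') <;> simp_all [G']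
  have hinduce : G'.induce s = (toGraph E).induce s := by
    ext ⟨i | j, hu⟩ ⟨i' | j', hv⟩ <;> simp only [mem_inl, mem_inr] at hu hv <;>
      simp [G', hu, hv]
  have hcompl : sᶜ = ↑(Sᶜ.disjSum Tᶜ) := by
    ext (i | j) <;> simp [s]
  rw [numComponents, card_connectedComponent_eq_card_induce_add hisolated, hinduce, hcompl,
    Nat.card_coe_set_eq, Set.ncard_coe_finset, card_disjSum, add_assoc]

theorem InIStar.oneSided_left {A : Finset (Fin m)} (h : InIStar E A ∅) :
    A.Nonempty ∧ A ≠ univ ∧ ¬ ∃ B₁ B₂, TwoSidedIndep E B₁ B₂ ∧ A ⊆ B₁ := by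
  rcases h with h | ⟨-, hne, ⟨v, rfl⟩, hmax⟩ | ⟨-, hne, -⟩
  · exact absurd h.1.2.2.1 (by simp)
  · exact ⟨hne, by simp [eq_univ_iff_forall], hmax⟩
  · exact absurd hne (by simp)

theorem InIStar.oneSided_right {B : Finset (Fin n)} (h : InIStar E ∅ B) :
    B.Nonempty ∧ B ≠ univ ∧ ¬ ∃ B₁ B₂, TwoSidedIndep E B₁ B₂ ∧ B ⊆ B₂ := by
  rcases h with h | ⟨-, hne, -⟩ | ⟨-, hne, ⟨v, rfl⟩, hmax⟩
  · exact absurd h.1.1 (by simp)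
  · exact absurd hne (by simp)
  · exact ⟨hne, by simp [eq_univ_iff_forall], hmax⟩

variable [∀ i j, Decidable (E i j)]

theorem nbrR_eq_univ [Nontrivial (Fin n)] {A : Finset (Fin m)} (hA : A.Nonempty)
    (hAu : A ≠ univ) (hmax : ¬ ∃ B₁ B₂, TwoSidedIndep E B₁ B₂ ∧ A ⊆ B₁) :
    nbrR E A = univ := by
  refine eq_univ_iff_forall.2 fun j => by_contra fun hj => hmax ⟨A, {j}, ?_, subset_rfl⟩
  refine ⟨hA, hAu, singleton_nonempty j, singleton_ne_univ j, fun i hi j' hj' hE => hj ?_⟩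
  rw [mem_singleton.1 hj'] at hE
  exact mem_filter.2 ⟨mem_univ _, i, hi, hE⟩

theorem nbrL_eq_univ [Nontrivial (Fin m)] {B : Finset (Fin n)} (hB : B.Nonempty)
    (hBu : B ≠ univ) (hmax : ¬ ∃ B₁ B₂, TwoSidedIndep E B₁ B₂ ∧ B ⊆ B₂) :
    nbrL E B = univ := by
  refine eq_univ_iff_forall.2 fun i => by_contra fun hi => hmax ⟨{i}, B, ?_, subset_rfl⟩
  refine ⟨singleton_nonempty i, singleton_ne_univ i, hB, hBu, fun i' hi' j hj hE => hi ?_⟩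
  rw [mem_singleton.1 hi'] at hE
  exact mem_filter.2 ⟨mem_univ _, j, hj, hE⟩

theorem assoc_left_of_nbrR_eq_univ {A : Finset (Fin m)} (h : nbrR E A = univ)
    (i : Fin m) (j : Fin n) : assoc E A ∅ i j ↔ E i j ∧ i ∈ A := by
  simp [assoc, h]

theorem assoc_right_of_nbrL_eq_univ {B : Finset (Fin n)} (hB : B.Nonempty) (h : nbrL E B = univ)
    (i : Fin m) (j : Fin n) : assoc E ∅ B i j ↔ E i j ∧ j ∈ B := by
  simp [assoc, h, hB.ne_empty]

theorem two_face_AB_general (m n : ℕ) (E : Fin m → Fin n → Prop)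
    [∀ i j, Decidable (E i j)]
    (a : Fin m) (b : Fin n)
    (hA : FirstIndep E ({a}ᶜ) ∅) (hB : FirstIndep E ∅ ({b}ᶜ)) :
    numComponents (fun i j => assoc E ({a}ᶜ) ∅ i j ∧ assoc E ∅ ({b}ᶜ) i j) = 3 ↔
      InducedConnected E ({a}ᶜ) ({b}ᶜ) := by
  obtain ⟨⟨a', ha'⟩, hAu, hAmax⟩ := hA.1.oneSided_left
  obtain ⟨⟨b', hb'⟩, hBu, hBmax⟩ := hB.1.oneSided_right
  have : Nontrivial (Fin m) := nontrivial_of_ne a' a (by simpa using ha')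
  have : Nontrivial (Fin n) := nontrivial_of_ne b' b (by simpa using hb')
  have hnbrR : nbrR E {a}ᶜ = univ := nbrR_eq_univ ⟨a', ha'⟩ hAu hAmax
  have hnbrL : nbrL E {b}ᶜ = univ := nbrL_eq_univ ⟨b', hb'⟩ hBu hBmax
  have hG : (fun i j => assoc E ({a}ᶜ) ∅ i j ∧ assoc E ∅ ({b}ᶜ) i j) =
      fun i j => E i j ∧ i ∈ ({a}ᶜ : Finset (Fin m)) ∧ j ∈ ({b}ᶜ : Finset (Fin n)) := by
    ext i j
    rw [assoc_left_of_nbrR_eq_univ hnbrR, assoc_right_of_nbrL_eq_univ ⟨b', hb'⟩ hnbrL]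
    tauto
  have : Nonempty ↥(inl '' (({a}ᶜ : Finset (Fin m)) : Set (Fin m)) ∪
      inr '' (({b}ᶜ : Finset (Fin n)) : Set (Fin n))) := ⟨⟨inl a', by simpa using ha'⟩⟩
  rw [hG, numComponents_restrict, InducedConnected, connected_iff_card_connectedComponent_eq_one,
    compl_compl, compl_compl, card_singleton, card_singleton]
  omega

/-- Let `A = U₁ ∖ {a}` and `B = U₂ ∖ {b}` be first independent sets of a
connected bipartite graph `G ⊆ K_{m,n}`. Then the intersection subgraph `G{A} ∩ G{B}`
has exactly three connected components (equivalently, the corresponding pair of extremal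
rays spans a 2-face of the edge cone) if and only if the induced subgraph
`G[(U₁ ∖ {a}) ⊔ (U₂ ∖ {b})]` is connected. -/
theorem two_face_AB (m n : ℕ) (E : Fin m → Fin n → Prop)
    [∀ i j, Decidable (E i j)] (hconn : (toGraph E).Connected)
    (a : Fin m) (b : Fin n)
    (hA : FirstIndep E ({a}ᶜ) ∅) (hB : FirstIndep E ∅ ({b}ᶜ)) :
    numComponents (fun i j => assoc E ({a}ᶜ) ∅ i j ∧ assoc E ∅ ({b}ᶜ) i j) = 3 ↔
      InducedConnected E ({a}ᶜ) ({b}ᶜ) :=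
  two_face_AB_general m n E a b hA hB

end ToricBipartite
end
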